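/- The primitive part of the tensor module T(V) with respect to the co-half-shuffle coproduct Δ_≺ is exactly V: an element x ∈ T(V) satisfies Δ̄_≺(x) = 0 (i.e. Δ_≺(x) = x ⊗ 1) if and only if x ∈ V ⊕ K·1. -/

import Mathlib

/-!
Let `π : T(V) → V` be the projection onto degree one and `F(x) = Σ π(x₍₁₎) x₍₂₎`
(`recombineFirstLetter`), summed over the terms of `Δ_≺(x)`. On a word `a w` every splitting
with a nonempty left part puts a word of length at least two on the left, which `π` kills, so
only `a ⊗ w` survives and `F(a w) = a w`; also `F(1) = 0`. Hence `F(x) = x - ε(x)·1` with `ε`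
the augmentation. For a primitive `x` we have `F(x) = π(x) ∈ V`, so `x = ε(x)·1 + π(x)`.
-/

open scoped TensorProduct

/-- All order-preserving splittings (unshufflings) of a word into two
subwords. -/
def splits {α : Type*} : List α → List (List α × List α)
  | [] => [([], [])]
  | a :: l =>
      ((splits l).map fun p => (a :: p.1, p.2)) ++ ((splits l).map fun p => (p.1, a :: p.2))

/-- The word `v_1 ⋯ v_n` viewed inside the tensor algebra. -/
noncomputable def listProd (K : Type*) {V : Type*} [Field K] [AddCommGroup V]
    [Module K V] (l : List V) : TensorAlgebra K V :=
  (l.map (TensorAlgebra.ι K)).prod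

theorem sum_map_splits_of_fst_ne_nil {α M : Type*} [AddCommMonoid M]
    (f : List α × List α → M) (hf : ∀ p, p.1 ≠ [] → f p = 0) (w : List α) :
    ((splits w).map f).sum = f ([], w) := by
  induction w generalizing f with
  | nil => simp [splits]
  | cons b t ih =>
    have hleft : ((splits t).map fun p => f (b :: p.1, p.2)).sum = 0 :=
      List.sum_eq_zero fun y hy => by
        obtain ⟨p, -, rfl⟩ := List.mem_map.1 hy
        exact hf _ (List.cons_ne_nil _ _)
    simp only [splits, List.map_append, List.map_map, List.sum_append, Function.comp_def, hleft,
      zero_add]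
    exact ih (fun p => f (p.1, b :: p.2)) fun p hp => hf _ hp

namespace TensorAlgebra

variable {R M : Type*} [CommSemiring R] [AddCommMonoid M] [Module R M]

@[simp]
theorem algebraMapInv_ι (m : M) : algebraMapInv (ι R m) = 0 := by
  simp [algebraMapInv]

@[simp]
theorem ιInv_one : ιInv (1 : TensorAlgebra R M) = 0 := by
  let : Module Rᵐᵒᵖ M := Module.compHom _ ((RingHom.id R).fromOpposite mul_comm)
  have : IsCentralScalar R M := ⟨fun r m => rfl⟩
  simp [ιInv]

theorem ιInv_ι_mul (m : M) (x : TensorAlgebra R M) :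
    ιInv (ι R m * x) = algebraMapInv x • m := by
  let : Module Rᵐᵒᵖ M := Module.compHom _ ((RingHom.id R).fromOpposite mul_comm)
  have : IsCentralScalar R M := ⟨fun r m => rfl⟩
  have hfst : (TrivSqZeroExt.fstHom R R M).comp toTrivSqZeroExt = algebraMapInv :=
    hom_ext <| LinearMap.ext fun m => by simp
  simp [ιInv, ← hfst]

end TensorAlgebra

open TensorAlgebra

section

variable (K : Type*) {V : Type*} [Field K] [AddCommGroup V] [Module K V]

@[simp]
theorem listProd_nil : listProd K ([] : List V) = 1 := rfl

theorem listProd_cons (a : V) (l : List V) :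
    listProd K (a :: l) = ι K a * listProd K l := by
  simp [listProd]

theorem coe_closure_range_ι :
    (Submonoid.closure (Set.range (ι K (M := V))) : Set (TensorAlgebra K V))
      = Set.range (listProd K) := by
  rw [Submonoid.closure_eq_image_prod, ← Set.range_list_map, ← Set.range_comp]
  rfl

theorem span_range_listProd : Submodule.span K (Set.range (listProd K (V := V))) = ⊤ := by
  rw [← coe_closure_range_ι, ← Algebra.adjoin_eq_span, adjoin_range_ι, Algebra.top_toSubmodule]

end

section

variable {K V : Type*} [Field K] [AddCommGroup V] [Module K V]

theorem ιInv_listProd_cons (a : V) (w : List V) :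
    ιInv (listProd K (a :: w)) = if w = [] then a else 0 := by
  cases w <;> simp [listProd_cons, ιInv_ι_mul, ι_leftInverse _]

variable (Δ : TensorAlgebra K V →ₗ[K] TensorAlgebra K V ⊗[K] TensorAlgebra K V)

noncomputable def recombineFirstLetter : TensorAlgebra K V →ₗ[K] TensorAlgebra K V :=
  LinearMap.mul' K _ ∘ₗ TensorProduct.map (ι K ∘ₗ ιInv) LinearMap.id ∘ₗ Δ

theorem recombineFirstLetter_of_primitive {x : TensorAlgebra K V} (hx : Δ x = x ⊗ₜ[K] 1) :
    recombineFirstLetter Δ x = ι K (ιInv x) := by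
  simp [recombineFirstLetter, hx]

theorem recombineFirstLetter_listProd_cons
    (hΔ : ∀ (a : V) (w : List V), Δ (listProd K (a :: w))
      = ((splits w).map fun p => listProd K (a :: p.1) ⊗ₜ[K] listProd K p.2).sum)
    (a : V) (w : List V) :
    recombineFirstLetter Δ (listProd K (a :: w)) = listProd K (a :: w) := by
  simp only [recombineFirstLetter, LinearMap.comp_apply, hΔ, map_list_sum, List.map_map]
  rw [sum_map_splits_of_fst_ne_nil]
  · simp [ιInv_listProd_cons, listProd_cons K a w]
  · rintro ⟨p₁, p₂⟩ (hp : p₁ ≠ [])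
    simp [ιInv_listProd_cons, hp]

theorem recombineFirstLetter_apply (hΔone : Δ 1 = 1 ⊗ₜ[K] 1)
    (hΔ : ∀ (a : V) (w : List V), Δ (listProd K (a :: w))
      = ((splits w).map fun p => listProd K (a :: p.1) ⊗ₜ[K] listProd K p.2).sum)
    (x : TensorAlgebra K V) :
    recombineFirstLetter Δ x = x - algebraMap K _ (algebraMapInv x) := by
  suffices recombineFirstLetter Δ = LinearMap.id - Algebra.linearMap K _ ∘ₗ algebraMapInv.toLinearMap
    from LinearMap.congr_fun this x
  refine LinearMap.ext_on_range (span_range_listProd K) fun l => ?_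
  cases l with
  | nil => simp [recombineFirstLetter, hΔone]
  | cons a w =>
    rw [LinearMap.sub_apply, recombineFirstLetter_listProd_cons Δ hΔ]
    simp [listProd_cons]

end

/-- The primitive part of the tensor module `T(V)` with respect to the
co-half-shuffle coproduct is exactly `V`: an element `x` satisfies
`Δ_≺(x) = x ⊗ 1` if and only if `x ∈ K·1 ⊕ V`. -/
theorem primitives_of_cohalf_shuffle
    {K V : Type*} [Field K] [AddCommGroup V] [Module K V]
    (Δ : TensorAlgebra K V →ₗ[K] TensorAlgebra K V ⊗[K] TensorAlgebra K V)
    (hΔone : Δ 1 = 1 ⊗ₜ[K] 1)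
    (hΔ : ∀ (a : V) (w : List V),
      Δ (listProd K (a :: w))
        = ((splits w).map fun p =>
            listProd K (a :: p.1) ⊗ₜ[K] listProd K p.2).sum) :
    ∀ x : TensorAlgebra K V,
      Δ x = x ⊗ₜ[K] 1 ↔
        x ∈ (Submodule.span K {(1 : TensorAlgebra K V)} ⊔
          LinearMap.range (TensorAlgebra.ι K (M := V))) := by
  intro x
  constructor
  · intro hx
    have h := recombineFirstLetter_apply Δ hΔone hΔ x
    rw [recombineFirstLetter_of_primitive Δ hx] at h
    have hdecomp : x = algebraMapInv x • 1 + ι K (ιInv x) := by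
      rw [h, ← Algebra.algebraMap_eq_smul_one, add_sub_cancel]
    rw [hdecomp]
    exact add_mem (Submodule.mem_sup_left <|
        Submodule.smul_mem _ _ (Submodule.mem_span_singleton_self 1))
      (Submodule.mem_sup_right ⟨_, rfl⟩)
  · intro h
    obtain ⟨_, hy, _, ⟨v, rfl⟩, rfl⟩ := Submodule.mem_sup.1 h
    obtain ⟨c, rfl⟩ := Submodule.mem_span_singleton.1 hy
    have hv : Δ (ι K v) = ι K v ⊗ₜ[K] 1 := by simpa [splits, listProd] using hΔ v []
    rw [map_add, map_smul, hΔone, hv, TensorProduct.add_tmul, TensorProduct.smul_tmul']
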